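/- Let F* = {ω̃, ω̃*} ∪ {L̃_n : n ≥ 2}, where L̃_n is the n-element chain together with infinitely many elements pairwise incomparable and incomparable to the chain, ω̃ is a chain of order type ω with infinitely many such incomparable elements added, and ω̃* is a chain of order type ω* with infinitely many such incomparable elements added. Then F* is PL-learnable but not E_3-learnable: some learner PL-learns F*, but there is no map Γ from structures to ℕ → (ℕ → ℕ), continuous on LD(F*), such that for all R, R' ∈ LD(F*), R ≅ R' iff Γ R E_3 Γ R'. -/

import Mathlib

/-- A structure on domain ℕ: a binary relation given as a map to `Bool`. -/
abbrev Struc := ℕ → ℕ → Bool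

/-- The restrictions of `R` and `R'` to `{0,…,s} × {0,…,s}` agree. -/
def restrEq (R R' : Struc) (s : ℕ) : Prop :=
  ∀ x ≤ s, ∀ y ≤ s, R x y = R' x y

/-- `R` and `R'` are isomorphic structures. -/
def Isom (R R' : Struc) : Prop :=
  ∃ e : ℕ ≃ ℕ, ∀ x y, R' (e x) (e y) = R x y

/-- `R↾s` embeds into `R'`: there is a map injective on `{0,…,s}` preserving the relation. -/
def EmbedsRestr (R : Struc) (s : ℕ) (R' : Struc) : Prop :=
  ∃ h : ℕ → ℕ, (∀ x ≤ s, ∀ y ≤ s, h x = h y → x = y) ∧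
    (∀ x ≤ s, ∀ y ≤ s, R' (h x) (h y) = R x y)

/-- The learning domain of a family: all isomorphic copies of members of the family. -/
def LD {I : Type} (A : I → Struc) : Set Struc := {R | ∃ i, Isom R (A i)}

/-- A learner: its conjecture at stage `s` depends only on `R↾s`. -/
def IsLearner {I : Type} (M : Struc → ℕ → Option I) : Prop :=
  ∀ R R' s, restrEq R R' s → M R s = M R' s

/-- `M` Ex-learns the family `A`. -/
def ExLearns {I : Type} (A : I → Struc) (M : Struc → ℕ → Option I) : Prop :=
  ∀ R i, Isom R (A i) → ∃ s₀, ∀ s ≥ s₀, M R s = some i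

/-- `M` Fin-learns the family `A`. -/
def FinLearns {I : Type} (A : I → Struc) (M : Struc → ℕ → Option I) : Prop :=
  ∀ R i, Isom R (A i) →
    ∃ s₀, (∀ s < s₀, M R s = none) ∧ (∀ s ≥ s₀, M R s = some i)

/-- `M` co-learns the family `A`. -/
def CoLearns {I : Type} (A : I → Struc) (M : Struc → ℕ → Option I) : Prop :=
  ∀ R i, Isom R (A i) → ∀ j, (∃ s, M R s = some j) ↔ j ≠ i

/-- `M` nUs-learns the family `A`: it Ex-learns it and never abandons the correct conjecture. -/
def NUsLearns {I : Type} (A : I → Struc) (M : Struc → ℕ → Option I) : Prop :=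
  ExLearns A M ∧
    ∀ R i, Isom R (A i) → ∀ s, M R s = some i → ∀ t ≥ s, M R t = some i

/-- `M` Dec-learns the family `A`: it Ex-learns it and never repeats an abandoned conjecture. -/
def DecLearns {I : Type} (A : I → Struc) (M : Struc → ℕ → Option I) : Prop :=
  ExLearns A M ∧
    ∀ R ∈ LD A, ∀ (j : I) (s : ℕ), M R s = some j → M R (s + 1) ≠ some j →
      ∀ t > s, M R t ≠ some j

/-- `M` PL-learns the family `A`: the unique conjecture output infinitely often is correct. -/
def PLLearns {I : Type} (A : I → Struc) (M : Struc → ℕ → Option I) : Prop :=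
  ∀ R ∈ LD A, ∀ i, {s | M R s = some i}.Infinite ↔ Isom R (A i)

/-- The relation `E₀` on Baire space: eventual agreement. -/
def E0 (p q : ℕ → ℕ) : Prop := ∃ m, ∀ n ≥ m, p n = q n

/-- The relation `E₃` on `ℕ → (ℕ → ℕ)`: columnwise `E₀`. -/
def E3 (p q : ℕ → ℕ → ℕ) : Prop := ∀ m, E0 (p m) (q m)

/-- The relation `E_range` on Baire space: equality of ranges. -/
def Erange (p q : ℕ → ℕ) : Prop := Set.range p = Set.range q

/-- `ω̃`: a chain of order type ω (on the even numbers) together with infinitely many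
elements pairwise incomparable and incomparable to the chain (the odd numbers). -/
def tildeOmega : Struc := fun x y =>
  decide (x = y ∨ (x % 2 = 0 ∧ y % 2 = 0 ∧ x ≤ y))

/-- `ω̃*`: a chain of order type ω* (on the even numbers) together with infinitely many
elements pairwise incomparable and incomparable to the chain (the odd numbers). -/
def tildeOmegaStar : Struc := fun x y =>
  decide (x = y ∨ (x % 2 = 0 ∧ y % 2 = 0 ∧ y ≤ x))

/-- `L̃_n`: the `n`-element chain `{0,…,n−1}` together with infinitely many further
elements pairwise incomparable and incomparable to the chain. -/
def tildeChain (n : ℕ) : Struc := fun x y => decide (x = y ∨ (x ≤ y ∧ y < n))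

/-- The family `F* = {ω̃, ω̃*} ∪ {L̃_n : n ≥ 2}`. -/
def Fstar : ℕ → Struc
  | 0 => tildeOmega
  | 1 => tildeOmegaStar
  | k + 2 => tildeChain (k + 2)


/-!
The learner watches the chain visible in `R↾s`. On a copy of `ω̃` its top moves infinitely
often while its bottom settles, on a copy of `ω̃*` it is the other way round, and on a copy of
`L̃_n` the visible chain itself settles with `n` elements. The learner conjectures `ω̃`, `ω̃*` or
`L̃_n` accordingly; in particular it tells the members of `F*` apart, so they are pairwise
non-isomorphic.

Now let `Γ` be continuous and isomorphism invariant and fix a column `m`. A finite-extension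
argument gives a finite chain `F` such that `(Γ X)_m E₀ (Γ ω̃)_m` for every finite chain `X`
end-extending `F`: otherwise, using continuity to freeze a disagreement at each stage, one builds
a copy of `ω̃` whose column `m` differs from that of `ω̃` infinitely often. Applied to `Γ ∘ transp`
this gives a finite chain `F'` whose end-extensions behave, after transposition, like
`ω̃* = transp ω̃`. End-extensions of `F` and `F'` of the same length are `L̃_n`'s, hence isomorphic
to each other's transposes, so `(Γ ω̃)_m E₀ (Γ ω̃*)_m` for every `m` although `ω̃ ≇ ω̃*`.
-/

open Filter Topology

theorem isom_refl (R : Struc) : Isom R R := ⟨Equiv.refl ℕ, fun _ _ => rfl⟩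

theorem Isom.symm {R R' : Struc} : Isom R R' → Isom R' R := by
  rintro ⟨e, he⟩
  exact ⟨e.symm, fun x y => by simpa using (he (e.symm x) (e.symm y)).symm⟩

theorem Isom.trans {R R' R'' : Struc} : Isom R R' → Isom R' R'' → Isom R R'' := by
  rintro ⟨e, he⟩ ⟨f, hf⟩
  exact ⟨e.trans f, fun x y => (hf _ _).trans (he x y)⟩

def transp (R : Struc) : Struc := fun x y => R y x

theorem Isom.transp {R R' : Struc} : Isom R R' → Isom (transp R) (transp R') := by
  rintro ⟨e, he⟩
  exact ⟨e, fun x y => he y x⟩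

theorem continuous_transp : Continuous transp :=
  continuous_pi fun x => continuous_pi fun y => (continuous_apply x).comp (continuous_apply y)

theorem restrEq.transp {R R' : Struc} {s : ℕ} (h : restrEq R R' s) :
    restrEq (transp R) (transp R') s :=
  fun x hx y hy => h y hy x hx

def IsolatedOff (R : Struc) (K : Set ℕ) : Prop :=
  ∀ x y, x ∉ K ∨ y ∉ K → R x y = decide (x = y)

theorem IsolatedOff.transp {R : Struc} {K : Set ℕ} (h : IsolatedOff R K) :
    IsolatedOff (transp R) K := fun x y hxy => by
  change R y x = _
  rw [h y x hxy.symm, decide_eq_decide]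
  exact eq_comm

theorem isom_of_equiv_on {R R' : Struc} {K K' : Set ℕ} (hR : IsolatedOff R K)
    (hR' : IsolatedOff R' K') (hK : Kᶜ.Infinite) (hK' : K'ᶜ.Infinite) (φ : K ≃ K')
    (hφ : ∀ x y : K, R' (φ x) (φ y) = R x y) : Isom R R' := by
  classical
  have := hK.to_subtype
  have := hK'.to_subtype
  let ψ : ↥Kᶜ ≃ ↥K'ᶜ :=
    (Nat.Subtype.orderIsoOfNat Kᶜ).symm.toEquiv.trans (Nat.Subtype.orderIsoOfNat K'ᶜ).toEquiv
  let e : ℕ ≃ ℕ :=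
    (Equiv.Set.sumCompl K).symm.trans ((φ.sumCongr ψ).trans (Equiv.Set.sumCompl K'))
  have he_mem : ∀ x (hx : x ∈ K), e x = φ ⟨x, hx⟩ := fun x hx => by
    simp [e, Equiv.Set.sumCompl_symm_apply_of_mem hx]
  have he_notMem : ∀ x, x ∉ K → e x ∉ K' := fun x hx => by
    have := (ψ ⟨x, hx⟩).2
    simp only [e, Equiv.trans_apply, Equiv.Set.sumCompl_symm_apply_of_notMem hx,
      Equiv.sumCongr_apply, Sum.map_inr, Equiv.Set.sumCompl_apply_inr]
    exact this
  refine ⟨e, fun x y => ?_⟩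
  by_cases hxy : x ∈ K ∧ y ∈ K
  · rw [he_mem x hxy.1, he_mem y hxy.2]
    exact hφ ⟨x, hxy.1⟩ ⟨y, hxy.2⟩
  · have hout : x ∉ K ∨ y ∉ K := not_and_or.1 hxy
    rw [hR' _ _ (hout.imp (he_notMem x) (he_notMem y)), hR _ _ hout]
    exact decide_eq_decide.2 e.injective.eq_iff

open Classical in
noncomputable def chainOn (K : Set ℕ) : Struc := fun x y =>
  decide (x = y ∨ (x ∈ K ∧ y ∈ K ∧ x ≤ y))

section ChainOn

variable {K K' : Set ℕ}

theorem chainOn_eq_true {x y : ℕ} :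
    chainOn K x y = true ↔ x = y ∨ (x ∈ K ∧ y ∈ K ∧ x ≤ y) := by
  simp [chainOn]

theorem chainOn_of_mem {x y : ℕ} (hx : x ∈ K) (hy : y ∈ K) : chainOn K x y = decide (x ≤ y) :=
  decide_eq_decide.2 ⟨by rintro (rfl | h); exacts [le_rfl, h.2.2], fun h => .inr ⟨hx, hy, h⟩⟩

theorem isolatedOff_chainOn : IsolatedOff (chainOn K) K := fun _ _ h =>
  decide_eq_decide.2 (or_iff_left fun h' => h.elim (· h'.1) (· h'.2.1))

theorem restrEq_chainOn {s : ℕ} (h : ∀ x ≤ s, x ∈ K ↔ x ∈ K') :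
    restrEq (chainOn K) (chainOn K') s := fun x hx y hy =>
  decide_eq_decide.2 (by rw [h x hx, h y hy])

theorem isom_chainOn_of_orderIso (hK : Kᶜ.Infinite) (hK' : K'ᶜ.Infinite) (φ : K ≃o K') :
    Isom (chainOn K) (chainOn K') :=
  isom_of_equiv_on isolatedOff_chainOn isolatedOff_chainOn hK hK' φ.toEquiv fun x y => by
    change chainOn K' (φ x) (φ y) = _
    rw [chainOn_of_mem (φ x).2 (φ y).2, chainOn_of_mem x.2 y.2]
    exact decide_eq_decide.2 φ.le_iff_le

theorem compl_finset_infinite (F : Finset ℕ) : (↑F : Set ℕ)ᶜ.Infinite :=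
  F.finite_toSet.infinite_compl

theorem isom_chainOn_of_card_eq {F F' : Finset ℕ} (h : F.card = F'.card) :
    Isom (chainOn F) (chainOn F') :=
  isom_chainOn_of_orderIso (compl_finset_infinite F) (compl_finset_infinite F')
    ((F.orderIsoOfFin h).symm.trans (F'.orderIsoOfFin rfl))

theorem isom_transp_chainOn_range (n : ℕ) :
    Isom (transp (chainOn (Finset.range n))) (chainOn (Finset.range n)) := by
  have mem (x : ↥(↑(Finset.range n) : Set ℕ)) : (x : ℕ) < n := by simpa using x.2
  let rev : ↥(↑(Finset.range n) : Set ℕ) → ↥(↑(Finset.range n) : Set ℕ) :=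
    fun x => ⟨n - 1 - x, by have := mem x; simp only [Finset.coe_range, Set.mem_Iio]; omega⟩
  refine isom_of_equiv_on isolatedOff_chainOn.transp isolatedOff_chainOn
    (compl_finset_infinite _) (compl_finset_infinite _)
    (Function.Involutive.toPerm rev fun x => Subtype.ext (by
      have := mem x
      show n - 1 - (n - 1 - (x : ℕ)) = x
      omega))
    fun x y => ?_
  change chainOn _ (rev x) (rev y) = chainOn _ y x
  rw [chainOn_of_mem (rev x).2 (rev y).2, chainOn_of_mem y.2 x.2]
  have := mem x; have := mem y
  exact decide_eq_decide.2 (show n - 1 - (x : ℕ) ≤ n - 1 - y ↔ (y : ℕ) ≤ x by omega)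

theorem isom_transp_chainOn (F : Finset ℕ) : Isom (transp (chainOn F)) (chainOn F) :=
  ((isom_chainOn_of_card_eq (Finset.card_range F.card).symm).transp.trans
    (isom_transp_chainOn_range _)).trans (isom_chainOn_of_card_eq (Finset.card_range _))

end ChainOn

theorem tildeOmega_eq_chainOn : tildeOmega = chainOn {x | x % 2 = 0} :=
  funext₂ fun _ _ => decide_eq_decide.2 Iff.rfl

theorem tildeOmegaStar_eq_transp : tildeOmegaStar = transp tildeOmega :=
  funext₂ fun _ _ => decide_eq_decide.2 (by omega)

theorem tildeChain_eq_chainOn (n : ℕ) : tildeChain n = chainOn (Finset.range n) :=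
  funext₂ fun _ _ => decide_eq_decide.2 (by simp only [Finset.coe_range, Set.mem_Iio]; omega)

theorem evens_infinite : {x : ℕ | x % 2 = 0}.Infinite :=
  Set.infinite_of_forall_exists_gt fun a => ⟨2 * a + 2, by simp, by omega⟩

theorem isom_chainOn_tildeOmega {K : Set ℕ} (hK : K.Infinite) (hKc : Kᶜ.Infinite) :
    Isom (chainOn K) tildeOmega := by
  have hEc : {x : ℕ | x % 2 = 0}ᶜ.Infinite :=
    Set.infinite_of_forall_exists_gt fun a => ⟨2 * a + 1, by simp [Nat.add_mod], by omega⟩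
  have := hK.to_subtype
  have := evens_infinite.to_subtype
  rw [tildeOmega_eq_chainOn]
  exact isom_chainOn_of_orderIso hKc hEc
    ((Nat.Subtype.orderIsoOfNat K).symm.trans (Nat.Subtype.orderIsoOfNat _))

theorem chainOn_mem_LD_of_infinite {K : Set ℕ} (hK : K.Infinite) (hKc : Kᶜ.Infinite) :
    chainOn K ∈ LD Fstar :=
  ⟨0, isom_chainOn_tildeOmega hK hKc⟩

theorem chainOn_mem_LD {F : Finset ℕ} (hF : 2 ≤ F.card) : chainOn F ∈ LD Fstar := by
  obtain ⟨k, hk⟩ := Nat.exists_eq_add_of_le' hF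
  refine ⟨k + 2, ?_⟩
  rw [Fstar, tildeChain_eq_chainOn]
  exact isom_chainOn_of_card_eq (by simp [hk])

theorem transp_mem_LD {R : Struc} (hR : R ∈ LD Fstar) : transp R ∈ LD Fstar := by
  obtain ⟨i, hi⟩ := hR
  match i with
  | 0 => exact ⟨1, by rw [Fstar, tildeOmegaStar_eq_transp]; exact hi.transp⟩
  | 1 => exact ⟨0, by rw [Fstar, tildeOmegaStar_eq_transp] at hi; exact hi.transp⟩
  | k + 2 =>
    refine ⟨k + 2, hi.transp.trans ?_⟩
    rw [Fstar, tildeChain_eq_chainOn]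
    exact isom_transp_chainOn _

open Classical in
noncomputable def visibleChain (R : Struc) (s : ℕ) : Finset ℕ :=
  (Finset.range (s + 1)).filter fun x => ∃ y ≤ s, y ≠ x ∧ (R x y = true ∨ R y x = true)

open Classical in
noncomputable def visibleMax (R : Struc) (s : ℕ) : Finset ℕ :=
  (visibleChain R s).filter fun x => ∀ y ∈ visibleChain R s, R y x = true

noncomputable def visibleMin (R : Struc) (s : ℕ) : Finset ℕ := visibleMax (transp R) s

noncomputable def chainLearner : Struc → ℕ → Option ℕ
  | _, 0 => none
  | R, s + 1 =>
    if visibleMax R (s + 1) ≠ visibleMax R s then some 0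
    else if visibleMin R (s + 1) ≠ visibleMin R s then some 1
    else some (visibleChain R (s + 1)).card

section Learner

variable {R R' : Struc}

theorem visibleChain_transp (s : ℕ) : visibleChain (transp R) s = visibleChain R s :=
  Finset.filter_congr fun _ _ => by simp only [transp, or_comm]

theorem le_of_mem_visibleChain {s x : ℕ} (hx : x ∈ visibleChain R s) : x ≤ s :=
  Nat.lt_succ_iff.1 (Finset.mem_range.1 (Finset.mem_filter.1 hx).1)

theorem visibleChain_congr {s k : ℕ} (h : restrEq R R' s) (hk : k ≤ s) :
    visibleChain R k = visibleChain R' k := by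
  refine Finset.filter_congr fun x hx => exists_congr fun y => and_congr_right fun hy => ?_
  have hxs : x ≤ s := (Nat.lt_succ_iff.1 (Finset.mem_range.1 hx)).trans hk
  rw [h x hxs y (hy.trans hk), h y (hy.trans hk) x hxs]

theorem visibleMax_congr {s k : ℕ} (h : restrEq R R' s) (hk : k ≤ s) :
    visibleMax R k = visibleMax R' k := by
  rw [visibleMax, visibleMax, visibleChain_congr h hk]
  refine Finset.filter_congr fun x hx => forall₂_congr fun y hy => ?_
  have bound : ∀ z ∈ visibleChain R' k, z ≤ s := fun z hz => (le_of_mem_visibleChain hz).trans hk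
  rw [h y (bound y hy) x (bound x hx)]

theorem visibleMin_congr {s k : ℕ} (h : restrEq R R' s) (hk : k ≤ s) :
    visibleMin R k = visibleMin R' k :=
  visibleMax_congr h.transp hk

theorem chainLearner_isLearner : IsLearner chainLearner := by
  rintro R R' (_ | s) h
  · rfl
  · simp only [chainLearner, visibleMax_congr h le_rfl, visibleMax_congr h (Nat.le_succ s),
      visibleMin_congr h le_rfl, visibleMin_congr h (Nat.le_succ s), visibleChain_congr h le_rfl]

theorem eventually_atTop_of_succ {p : ℕ → Prop} (h : ∀ᶠ s in atTop, p (s + 1)) :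
    ∀ᶠ s in atTop, p s := by
  rw [← map_add_atTop_eq_nat 1]
  exact h

theorem chainLearner_of_top_moves {C : Finset ℕ}
    (hmin : ∀ᶠ s in atTop, visibleMin R s = C)
    (hmax : ∃ᶠ s in atTop, visibleMax R (s + 1) ≠ visibleMax R s)
    (hcard : Tendsto (fun s => (visibleChain R s).card) atTop atTop) :
    (∃ᶠ s in atTop, chainLearner R s = some 0) ∧
      ∀ j ≠ 0, ∀ᶠ s in atTop, chainLearner R s ≠ some j := by
  refine ⟨(tendsto_add_atTop_nat 1).frequently (hmax.mono fun s hs => if_pos hs),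
    fun j hj => eventually_atTop_of_succ ?_⟩
  filter_upwards [hmin, (tendsto_add_atTop_nat 1).eventually hmin,
    (tendsto_add_atTop_nat 1).eventually (hcard.eventually_gt_atTop j)] with s h₀ h₁ hj'
  simp only [chainLearner, h₀, h₁, ne_eq, not_true_eq_false, if_false]
  split_ifs <;> simp <;> omega

theorem chainLearner_of_bottom_moves {C : Finset ℕ}
    (hmax : ∀ᶠ s in atTop, visibleMax R s = C)
    (hmin : ∃ᶠ s in atTop, visibleMin R (s + 1) ≠ visibleMin R s)
    (hcard : Tendsto (fun s => (visibleChain R s).card) atTop atTop) :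
    (∃ᶠ s in atTop, chainLearner R s = some 1) ∧
      ∀ j ≠ 1, ∀ᶠ s in atTop, chainLearner R s ≠ some j := by
  have hmax' : ∀ᶠ s in atTop, visibleMax R (s + 1) = visibleMax R s := by
    filter_upwards [hmax, (tendsto_add_atTop_nat 1).eventually hmax] with s h₀ h₁
    rw [h₀, h₁]
  refine ⟨(tendsto_add_atTop_nat 1).frequently
    ((hmin.and_eventually hmax').mono fun s hs => by simp [chainLearner, hs.1, hs.2]),
    fun j hj => eventually_atTop_of_succ ?_⟩
  filter_upwards [hmax', (tendsto_add_atTop_nat 1).eventually (hcard.eventually_gt_atTop j)]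
    with s h₀ hj'
  simp only [chainLearner, h₀, ne_eq, not_true_eq_false, if_false]
  split_ifs <;> simp <;> omega

theorem chainLearner_of_stable {C : Finset ℕ} (h : ∀ᶠ s in atTop, visibleChain R s = C) :
    ∀ᶠ s in atTop, chainLearner R s = some C.card := by
  refine eventually_atTop_of_succ ?_
  filter_upwards [h, (tendsto_add_atTop_nat 1).eventually h] with s h₀ h₁
  simp [chainLearner, visibleMin, visibleMax, visibleChain_transp, h₀, h₁]

end Learner

section Relabelled

variable {R : Struc} {K : Set ℕ} {e : ℕ ≃ ℕ} (he : ∀ x y, chainOn K (e x) (e y) = R x y)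
include he

theorem rel_eq_true_iff_of_chainOn {x y : ℕ} :
    R x y = true ↔ x = y ∨ (e x ∈ K ∧ e y ∈ K ∧ e x ≤ e y) := by
  rw [← he, chainOn_eq_true, e.injective.eq_iff]

theorem comparable_iff_of_chainOn {x y : ℕ} (hxy : x ≠ y) :
    (R x y = true ∨ R y x = true) ↔ e x ∈ K ∧ e y ∈ K := by
  simp only [rel_eq_true_iff_of_chainOn he, hxy, hxy.symm, false_or]
  refine ⟨by rintro (h | h); exacts [⟨h.1, h.2.1⟩, ⟨h.2.1, h.1⟩], fun h => ?_⟩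
  rcases le_total (e x) (e y) with hle | hle
  exacts [.inl ⟨h.1, h.2, hle⟩, .inr ⟨h.2, h.1, hle⟩]

theorem mem_visibleChain_eventually (hK : K.Nontrivial) :
    ∀ᶠ s in atTop, ∀ x, x ∈ visibleChain R s ↔ x ≤ s ∧ e x ∈ K := by
  obtain ⟨a, ha, b, hb, hab⟩ := hK
  filter_upwards [eventually_ge_atTop (e.symm a), eventually_ge_atTop (e.symm b)] with s hsa hsb x
  simp only [visibleChain, Finset.mem_filter, Finset.mem_range, Nat.lt_succ_iff,
    and_congr_right_iff]
  refine fun _ => ⟨fun ⟨y, _, hyx, hxy⟩ => ((comparable_iff_of_chainOn he hyx.symm).1 hxy).1,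
    fun hx => ?_⟩
  obtain ⟨y, hys, hyx, hy⟩ : ∃ y ≤ s, y ≠ x ∧ e y ∈ K := by
    by_cases hax : e.symm a = x
    · refine ⟨e.symm b, hsb, fun hbx => hab ?_, by simpa⟩
      simpa using hax.trans hbx.symm
    · exact ⟨e.symm a, hsa, hax, by simpa⟩
  exact ⟨y, hys, hyx, (comparable_iff_of_chainOn he hyx.symm).2 ⟨hx, hy⟩⟩

theorem visibleMin_eventually_eq (hK : K.Nontrivial) :
    ∀ᶠ s in atTop, visibleMin R s = {e.symm (sInf K)} := by
  have hmin : e (e.symm (sInf K)) ∈ K := by simpa using Nat.sInf_mem hK.nonempty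
  filter_upwards [mem_visibleChain_eventually he hK, eventually_ge_atTop (e.symm (sInf K))]
    with s hV hs
  ext x
  rw [visibleMin, visibleMax, Finset.mem_filter, visibleChain_transp, hV, Finset.mem_singleton]
  simp only [hV, transp, rel_eq_true_iff_of_chainOn he]
  constructor
  · rintro ⟨⟨-, hx⟩, hall⟩
    rcases hall _ ⟨by omega, hmin⟩ with h | ⟨-, -, h⟩
    · exact h
    · exact e.injective (le_antisymm h (by simpa using Nat.sInf_le hx))
  · rintro rfl
    exact ⟨⟨by omega, hmin⟩, fun y ⟨_, hy⟩ => .inr ⟨hmin, hy, by simpa using Nat.sInf_le hy⟩⟩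

theorem frequently_visibleMax_ne (hK : K.Infinite) :
    ∃ᶠ s in atTop, visibleMax R (s + 1) ≠ visibleMax R s := by
  intro hstable
  obtain ⟨k, hk⟩ := hK.nonempty
  obtain ⟨s₀, hs₀⟩ := eventually_atTop.1 (hstable.and
    ((mem_visibleChain_eventually he hK.nontrivial).and (eventually_ge_atTop (e.symm k))))
  have hconst : ∀ s ≥ s₀, visibleMax R s = visibleMax R s₀ :=
    Nat.le_induction rfl fun s hs ih => (not_not.1 (hs₀ s hs).1).trans ih
  have hV : ∀ s ≥ s₀, ∀ x, x ∈ visibleChain R s ↔ x ≤ s ∧ e x ∈ K := fun s hs =>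
    (hs₀ s hs).2.1
  obtain ⟨x, hx, hxmax⟩ := (visibleChain R s₀).exists_max_image e
    ⟨e.symm k, (hV s₀ le_rfl _).2 ⟨(hs₀ s₀ le_rfl).2.2, by simpa⟩⟩
  have hxtop : x ∈ visibleMax R s₀ := Finset.mem_filter.2 ⟨hx, fun y hy =>
    (rel_eq_true_iff_of_chainOn he).2 (.inr ⟨((hV s₀ le_rfl y).1 hy).2,
      ((hV s₀ le_rfl x).1 hx).2, hxmax y hy⟩)⟩
  obtain ⟨k', hk', hxk'⟩ := hK.exists_gt (e x)
  set s := max s₀ (e.symm k')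
  rw [← hconst s (le_max_left _ _)] at hxtop
  have := (Finset.mem_filter.1 hxtop).2 (e.symm k')
    ((hV s (le_max_left _ _) _).2 ⟨le_max_right _ _, by simpa⟩)
  rcases (rel_eq_true_iff_of_chainOn he).1 this with h | ⟨-, -, h⟩
  · simp [← h] at hxk'
  · rw [Equiv.apply_symm_apply] at h
    omega

theorem tendsto_card_visibleChain (hK : K.Infinite) :
    Tendsto (fun s => (visibleChain R s).card) atTop atTop := by
  refine tendsto_atTop.2 fun n => ?_
  obtain ⟨T, hTK, hTn⟩ := hK.exists_subset_card_eq n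
  filter_upwards [mem_visibleChain_eventually he hK.nontrivial,
    eventually_ge_atTop ((T.image e.symm).sup id)] with s hV hs
  calc n = (T.image e.symm).card := by rw [Finset.card_image_of_injective _ e.symm.injective, hTn]
    _ ≤ (visibleChain R s).card := Finset.card_le_card fun x hx => by
      obtain ⟨k, hk, rfl⟩ := Finset.mem_image.1 hx
      rw [hV, Equiv.apply_symm_apply]
      exact ⟨(Finset.le_sup (f := id) hx).trans hs, hTK hk⟩

end Relabelled

theorem visibleChain_eventually_eq_image {R : Struc} {F : Finset ℕ} {e : ℕ ≃ ℕ}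
    (he : ∀ x y, chainOn F (e x) (e y) = R x y) (hF : 2 ≤ F.card) :
    ∀ᶠ s in atTop, visibleChain R s = F.image e.symm := by
  filter_upwards [mem_visibleChain_eventually he (Finset.one_lt_card_iff_nontrivial.1 hF),
    eventually_ge_atTop ((F.image e.symm).sup id)] with s hV hs
  ext x
  rw [hV, Finset.mem_coe, Finset.mem_image]
  constructor
  · exact fun ⟨_, hx⟩ => ⟨e x, hx, by simp⟩
  · rintro ⟨k, hk, rfl⟩
    exact ⟨(Finset.le_sup (f := id) (Finset.mem_image_of_mem _ hk)).trans hs, by simpa⟩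

theorem chainLearner_spec {R : Struc} {i : ℕ} (h : Isom R (Fstar i)) :
    (∃ᶠ s in atTop, chainLearner R s = some i) ∧
      ∀ j ≠ i, ∀ᶠ s in atTop, chainLearner R s ≠ some j := by
  obtain ⟨e, he⟩ := h
  match i with
  | 0 =>
    rw [Fstar, tildeOmega_eq_chainOn] at he
    exact chainLearner_of_top_moves (visibleMin_eventually_eq he evens_infinite.nontrivial)
      (frequently_visibleMax_ne he evens_infinite) (tendsto_card_visibleChain he evens_infinite)
  | 1 =>
    rw [Fstar, tildeOmegaStar_eq_transp, tildeOmega_eq_chainOn] at he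
    -- `transp R` is a relabelled `ω̃`, and `visibleMin (transp R)` is `visibleMax R` by definition
    have he' : ∀ x y, chainOn _ (e x) (e y) = transp R x y := fun x y => he y x
    exact chainLearner_of_bottom_moves (visibleMin_eventually_eq he' evens_infinite.nontrivial)
      (frequently_visibleMax_ne he' evens_infinite)
      (by simpa only [visibleChain_transp] using tendsto_card_visibleChain he' evens_infinite)
  | k + 2 =>
    rw [Fstar, tildeChain_eq_chainOn] at he
    have hout := chainLearner_of_stable (visibleChain_eventually_eq_image he (by simp))
    rw [Finset.card_image_of_injective _ e.symm.injective, Finset.card_range] at hout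
    exact ⟨hout.frequently, fun j hj => hout.mono fun s hs => by rw [hs]; simpa using hj.symm⟩

theorem eq_of_frequently_chainLearner {R : Struc} {i j : ℕ} (h : Isom R (Fstar i))
    (hj : ∃ᶠ s in atTop, chainLearner R s = some j) : j = i := by
  by_contra hji
  obtain ⟨s, hs, hs'⟩ := (hj.and_eventually ((chainLearner_spec h).2 j hji)).exists
  exact hs' hs

theorem chainLearner_plLearns : PLLearns Fstar chainLearner := by
  rintro R ⟨i₀, h₀⟩ i
  rw [← Nat.frequently_atTop_iff_infinite]
  exact ⟨fun hi => eq_of_frequently_chainLearner h₀ hi ▸ h₀, fun hi => (chainLearner_spec hi).1⟩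

theorem not_isom_tildeOmega_tildeOmegaStar : ¬ Isom tildeOmega tildeOmegaStar := fun h =>
  zero_ne_one (eq_of_frequently_chainLearner (i := 1) h
    (chainLearner_spec (i := 0) (isom_refl _)).1)

theorem exists_restrEq_of_continuousWithinAt {Y : Type*} [TopologicalSpace Y]
    [DiscreteTopology Y] {f : Struc → Y} {S : Set Struc} {X : Struc}
    (hf : ContinuousWithinAt f S X) : ∃ t, ∀ W ∈ S, restrEq W X t → f W = f X := by
  have hanti : Antitone fun t => {W : Struc | restrEq W X t} :=
    fun t t' htt' W hW x hx y hy => hW x (hx.trans htt') y (hy.trans htt')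
  have hbasis := hasBasis_iInf_principal hanti.directed_ge
  have hle : (⨅ t, 𝓟 {W : Struc | restrEq W X t}) ≤ 𝓝 X := by
    refine tendsto_pi_nhds.2 fun x => tendsto_pi_nhds.2 fun y => ?_
    rw [nhds_discrete, tendsto_pure]
    exact mem_of_superset (hbasis.mem_of_mem (i := max x y) trivial) fun W hW =>
      hW x (le_max_left _ _) y (le_max_right _ _)
  rw [ContinuousWithinAt, nhds_discrete, tendsto_pure, eventually_nhdsWithin_iff] at hf
  obtain ⟨t, -, ht⟩ := hbasis.mem_iff.1 (hle hf)
  exact ⟨t, fun W hW hWt => ht hWt hW⟩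

structure IsEndExtensionSeq (F : ℕ → Finset ℕ) (s : ℕ → ℕ) : Prop where
  lt_bound : ∀ k, ∀ x ∈ F k, x < s k
  subset_succ : ∀ k, F k ⊆ F (k + 1)
  bound_lt : ∀ k, ∀ x ∈ F (k + 1), x ∉ F k → s k < x
  exists_bound_lt : ∀ k, ∃ x ∈ F (k + 1), s k < x

namespace IsEndExtensionSeq

variable {F : ℕ → Finset ℕ} {s : ℕ → ℕ} (h : IsEndExtensionSeq F s)
include h

theorem strictMono : StrictMono s := strictMono_nat_of_lt_succ fun k => by
  obtain ⟨x, hx, hsx⟩ := h.exists_bound_lt k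
  exact hsx.trans (h.lt_bound _ x hx)

theorem mem_iUnion_iff {k x : ℕ} (hx : x < s k) : x ∈ ⋃ i, (F i : Set ℕ) ↔ x ∈ F k := by
  simp only [Set.mem_iUnion, Finset.mem_coe]
  refine ⟨fun ⟨i, hi⟩ => ?_, fun hk => ⟨k, hk⟩⟩
  rcases le_total i k with hik | hki
  · exact monotone_nat_of_le_succ h.subset_succ hik hi
  induction i, hki using Nat.le_induction with
  | base => exact hi
  | succ i hki ih =>
    by_contra hxk
    exact (h.bound_lt i x hi fun hxi => hxk (ih hxi)).not_gt
      (hx.trans_le (h.strictMono.monotone hki))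

theorem infinite_iUnion : (⋃ k, (F k : Set ℕ)).Infinite :=
  Set.infinite_of_forall_exists_gt fun a => by
    obtain ⟨x, hx, hsx⟩ := h.exists_bound_lt a
    exact ⟨x, Set.mem_iUnion.2 ⟨a + 1, hx⟩, (h.strictMono.id_le a).trans_lt hsx⟩

theorem infinite_compl_iUnion : (⋃ k, (F k : Set ℕ))ᶜ.Infinite :=
  Set.infinite_of_injective_forall_mem h.strictMono.injective fun k hk => by
    have hsk := (h.mem_iUnion_iff (h.strictMono (Nat.lt_succ_self k))).1 hk
    exact (h.bound_lt k _ hsk fun hk' => (h.lt_bound k _ hk').false).false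

end IsEndExtensionSeq

theorem exists_infinite_coinfinite_frequently (Q : Set ℕ → ℕ → Prop)
    (h : ∀ (F : Finset ℕ) (s J : ℕ), (∀ x ∈ F, x < s) → ∃ (G : Finset ℕ) (t j : ℕ),
      G.Nonempty ∧ (∀ y ∈ G, s < y) ∧ J ≤ j ∧
      ∀ K : Set ℕ, K.Infinite → Kᶜ.Infinite → (∀ x ≤ t, x ∈ K ↔ x ∈ F ∪ G) → Q K j) :
    ∃ K : Set ℕ, K.Infinite ∧ Kᶜ.Infinite ∧ ∃ᶠ j in atTop, Q K j := by
  choose! G t j hG hGs hjJ hQ using h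
  -- stage `(F, s, J)`: the chain built so far, a bound above it, and the least admissible witness
  let next : Finset ℕ × ℕ × ℕ → Finset ℕ × ℕ × ℕ := fun c =>
    (c.1 ∪ G c.1 c.2.1 c.2.2, max (t c.1 c.2.1 c.2.2) ((c.1 ∪ G c.1 c.2.1 c.2.2).sup id) + 1,
      j c.1 c.2.1 c.2.2 + 1)
  let c : ℕ → Finset ℕ × ℕ × ℕ := fun k => next^[k] (∅, 0, 0)
  have c_succ (k : ℕ) : c (k + 1) = next (c k) := Function.iterate_succ_apply' _ _ _
  have bound (k : ℕ) : ∀ x ∈ (c k).1, x < (c k).2.1 := by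
    induction k with
    | zero => simp [c]
    | succ k _ =>
      rw [c_succ]
      exact fun x hx => Nat.lt_succ_of_le ((Finset.le_sup (f := id) hx).trans (le_max_right _ _))
  have F_succ (k : ℕ) : (c (k + 1)).1 = (c k).1 ∪ G (c k).1 (c k).2.1 (c k).2.2 := by
    rw [c_succ]
  have hseq : IsEndExtensionSeq (fun k => (c k).1) (fun k => (c k).2.1) := by
    refine ⟨bound, fun k => F_succ k ▸ Finset.subset_union_left, fun k x hx hxk => ?_, fun k => ?_⟩
    · rw [F_succ, Finset.mem_union] at hx
      exact hGs _ _ _ (bound k) x (hx.resolve_left hxk)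
    · obtain ⟨y, hy⟩ := hG _ _ _ (bound k)
      exact ⟨y, F_succ k ▸ Finset.mem_union_right _ hy, hGs _ _ _ (bound k) y hy⟩
  have t_lt (k : ℕ) : t (c k).1 (c k).2.1 (c k).2.2 < (c (k + 1)).2.1 := by
    rw [c_succ]
    exact Nat.lt_succ_of_le (le_max_left _ _)
  have J_ge (k : ℕ) : k ≤ (c k).2.2 := by
    induction k with
    | zero => exact le_rfl
    | succ k ih =>
      rw [c_succ]
      exact Nat.succ_le_succ (ih.trans (hjJ _ _ _ (bound k)))
  refine ⟨_, hseq.infinite_iUnion, hseq.infinite_compl_iUnion, frequently_atTop.2 fun k =>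
    ⟨_, (J_ge k).trans (hjJ _ _ _ (bound k)), hQ _ _ _ (bound k) _ hseq.infinite_iUnion
      hseq.infinite_compl_iUnion fun x hx => ?_⟩⟩
  rw [hseq.mem_iUnion_iff (hx.trans_lt (t_lt k)), F_succ]

theorem E0_iff_eventuallyEq {p q : ℕ → ℕ} : E0 p q ↔ p =ᶠ[atTop] q :=
  eventually_atTop.symm

theorem exists_condition_forcing_tildeOmega {Γ : Struc → ℕ → ℕ → ℕ}
    (hΓ : ContinuousOn Γ (LD Fstar))
    (hinv : ∀ R ∈ LD Fstar, ∀ R' ∈ LD Fstar, Isom R R' → E3 (Γ R) (Γ R')) (m : ℕ) :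
    ∃ (F : Finset ℕ) (s : ℕ), (∀ x ∈ F, x < s) ∧ ∀ G : Finset ℕ, 2 ≤ G.card →
      (∀ y ∈ G, s < y) → Γ (chainOn ↑(F ∪ G)) m =ᶠ[atTop] Γ tildeOmega m := by
  by_contra! hflex
  obtain ⟨K, hK, hKc, hfreq⟩ := exists_infinite_coinfinite_frequently
    (fun K j => Γ (chainOn K) m j ≠ Γ tildeOmega m j) fun F s J hF => by
      obtain ⟨G, hG, hGs, hne⟩ := hflex F s hF
      obtain ⟨j, hjJ, hj⟩ := frequently_atTop.1 (not_eventually.1 hne) J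
      have hX := chainOn_mem_LD
        (hG.trans (Finset.card_le_card (Finset.subset_union_right (s₁ := F))))
      obtain ⟨t, ht⟩ := exists_restrEq_of_continuousWithinAt
        (continuousWithinAt_pi.1 (continuousWithinAt_pi.1 (hΓ _ hX) m) j)
      refine ⟨G, t, j, Finset.card_pos.1 (by omega), hGs, hjJ, fun K hK hKc hKt => ?_⟩
      rw [ht _ (chainOn_mem_LD_of_infinite hK hKc) (restrEq_chainOn hKt)]
      exact hj
  have hω := E0_iff_eventuallyEq.1 <| hinv _ (chainOn_mem_LD_of_infinite hK hKc) _
    ⟨0, isom_refl _⟩ (isom_chainOn_tildeOmega hK hKc) m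
  obtain ⟨j, hne, heq⟩ := (hfreq.and_eventually hω).exists
  exact hne heq

theorem card_union_Ioc {F : Finset ℕ} {s : ℕ} (hF : ∀ x ∈ F, x < s) (k : ℕ) :
    (F ∪ Finset.Ioc s (s + k)).card = F.card + k := by
  rw [Finset.card_union_of_disjoint (Finset.disjoint_left.2 fun x hx hx' =>
    (hF x hx).not_gt (Finset.mem_Ioc.1 hx').1), Nat.card_Ioc, Nat.add_sub_cancel_left]

theorem E3_tildeOmega_tildeOmegaStar {Γ : Struc → ℕ → ℕ → ℕ} (hΓ : ContinuousOn Γ (LD Fstar))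
    (hinv : ∀ R ∈ LD Fstar, ∀ R' ∈ LD Fstar, Isom R R' → E3 (Γ R) (Γ R')) :
    E3 (Γ tildeOmega) (Γ tildeOmegaStar) := by
  intro m
  obtain ⟨F₁, s₁, hF₁, h₁⟩ := exists_condition_forcing_tildeOmega hΓ hinv m
  obtain ⟨F₂, s₂, hF₂, h₂⟩ := exists_condition_forcing_tildeOmega
    (hΓ.comp continuous_transp.continuousOn fun _ => transp_mem_LD)
    (fun R hR R' hR' h => hinv _ (transp_mem_LD hR) _ (transp_mem_LD hR') h.transp) m
  set G₁ := Finset.Ioc s₁ (s₁ + (F₂.card + 2))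
  set G₂ := Finset.Ioc s₂ (s₂ + (F₁.card + 2))
  have hcard₁ : (F₁ ∪ G₁).card = F₁.card + (F₂.card + 2) := card_union_Ioc hF₁ _
  have hcard₂ : (F₂ ∪ G₂).card = F₂.card + (F₁.card + 2) := card_union_Ioc hF₂ _
  have hX₁ := chainOn_mem_LD (by rw [hcard₁]; omega)
  have hX₂ := chainOn_mem_LD (by rw [hcard₂]; omega)
  have hiso := (isom_chainOn_of_card_eq (by rw [hcard₁, hcard₂]; ring)).trans
    (isom_transp_chainOn (F₂ ∪ G₂)).symm
  rw [E0_iff_eventuallyEq, tildeOmegaStar_eq_transp]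
  refine ((h₁ G₁ (by simp [G₁]) fun y hy => (Finset.mem_Ioc.1 hy).1).symm.trans ?_).trans
    (h₂ G₂ (by simp [G₂]) fun y hy => (Finset.mem_Ioc.1 hy).1)
  exact E0_iff_eventuallyEq.1 (hinv _ hX₁ _ (transp_mem_LD hX₂) hiso m)

/-- The family `F*` is PL-learnable but not `E₃`-learnable. -/
theorem Fstar_pl_not_e3 :
    (∃ M : Struc → ℕ → Option ℕ, IsLearner M ∧ PLLearns Fstar M) ∧
    ¬ ∃ Γ : Struc → (ℕ → ℕ → ℕ), ContinuousOn Γ (LD Fstar) ∧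
        ∀ R ∈ LD Fstar, ∀ R' ∈ LD Fstar, (Isom R R' ↔ E3 (Γ R) (Γ R')) := by
  refine ⟨⟨chainLearner, chainLearner_isLearner, chainLearner_plLearns⟩, ?_⟩
  rintro ⟨Γ, hΓ, hred⟩
  have hω : tildeOmega ∈ LD Fstar := ⟨0, isom_refl _⟩
  have hω' : tildeOmegaStar ∈ LD Fstar := ⟨1, isom_refl _⟩
  exact not_isom_tildeOmega_tildeOmegaStar <| (hred _ hω _ hω').2 <|
    E3_tildeOmega_tildeOmegaStar hΓ fun R hR R' hR' => (hred R hR R' hR').1
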